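/- For every integer n ≥ 1, the n-th root of the sum appearing in Dobinski's formula is strictly smaller than the (n+1)-st root of the next sum: ((1/e)·∑_{k≥0} k^n/k!)^{1/n} < ((1/e)·∑_{k≥0} k^{n+1}/k!)^{1/(n+1)}. -/

import Mathlib

/-!
Put `b m = e⁻¹ ∑ k^m/k!`. By Cauchy–Schwarz, `b (m+1)^2 ≤ b m * b (m+2)`, so `ℓ m = log (b m)`
has nondecreasing increments; moreover `ℓ 0 = ℓ 1 = 0`. Hence `ℓ n` is a sum of `n` increments,
the first of which is `0`, each at most the next increment `ℓ (n+1) - ℓ n`, which is positive.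
This gives `ℓ n < n (ℓ (n+1) - ℓ n)`, i.e. `ℓ n / n < ℓ (n+1) / (n+1)`.
-/

open Finset Real
open scoped Nat

theorem tsum_sq_le_tsum_mul_tsum_of_sq_le_mul {ι : Type*} {r f g : ι → ℝ}
    (hf : Summable f) (hg : Summable g) (hf0 : ∀ i, 0 ≤ f i) (hg0 : ∀ i, 0 ≤ g i)
    (ht : ∀ i, r i ^ 2 ≤ f i * g i) : (∑' i, r i) ^ 2 ≤ (∑' i, f i) * ∑' i, g i := by
  by_cases hr : Summable r
  · refine le_of_tendsto' (hr.hasSum.pow 2) fun s => ?_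
    calc (∑ i ∈ s, r i) ^ 2 ≤ (∑ i ∈ s, f i) * ∑ i ∈ s, g i :=
          sum_sq_le_sum_mul_sum_of_sq_le_mul s (fun i _ => hf0 i) (fun i _ => hg0 i)
            (fun i _ => ht i)
      _ ≤ (∑' i, f i) * ∑' i, g i :=
          mul_le_mul (hf.sum_le_tsum s fun i _ => hf0 i) (hg.sum_le_tsum s fun i _ => hg0 i)
            (sum_nonneg fun i _ => hg0 i) (tsum_nonneg hf0)
  · rw [tsum_eq_zero_of_not_summable hr, zero_pow two_ne_zero]
    exact mul_nonneg (tsum_nonneg hf0) (tsum_nonneg hg0)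

theorem tsum_mul_pow_succ_sq_le {ι : Type*} {w x : ι → ℝ} (hw : ∀ i, 0 ≤ w i)
    (hx : ∀ i, 0 ≤ x i) {m : ℕ} (hm : Summable fun i => w i * x i ^ m)
    (hm2 : Summable fun i => w i * x i ^ (m + 2)) :
    (∑' i, w i * x i ^ (m + 1)) ^ 2 ≤
      (∑' i, w i * x i ^ m) * ∑' i, w i * x i ^ (m + 2) :=
  tsum_sq_le_tsum_mul_tsum_of_sq_le_mul hm hm2 (fun i => mul_nonneg (hw i) (pow_nonneg (hx i) _))
    (fun i => mul_nonneg (hw i) (pow_nonneg (hx i) _)) fun i => le_of_eq (by ring)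

theorem monotone_log_sub_of_sq_le_mul {b : ℕ → ℝ} (hb : ∀ m, 0 < b m)
    (hconv : ∀ m, b (m + 1) ^ 2 ≤ b m * b (m + 2)) :
    Monotone fun m => log (b (m + 1)) - log (b m) := by
  refine monotone_nat_of_le_succ fun m => ?_
  have h := log_le_log (pow_pos (hb (m + 1)) 2) (hconv m)
  rw [log_pow, log_mul (hb m).ne' (hb (m + 2)).ne'] at h
  push_cast at h
  linarith

theorem div_lt_div_succ_of_monotone_sub {u : ℕ → ℝ} (hu : Monotone fun m => u (m + 1) - u m)
    (h0 : u 0 = 0) {n : ℕ} (hn : 1 ≤ n) (hlt : u 1 < u (n + 1) - u n) :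
    u n / n < u (n + 1) / (n + 1) := by
  have hsum : u n < n * (u (n + 1) - u n) :=
    calc u n = ∑ j ∈ range n, (u (j + 1) - u j) := by rw [sum_range_sub, h0, sub_zero]
      _ < ∑ _j ∈ range n, (u (n + 1) - u n) :=
          sum_lt_sum (fun j hj => hu (mem_range.1 hj).le)
            ⟨0, mem_range.2 hn, by simpa [h0] using hlt⟩
      _ = n * (u (n + 1) - u n) := by rw [sum_const, card_range, nsmul_eq_mul]
  have hn0 : (0 : ℝ) < n := by exact_mod_cast hn
  rw [div_lt_div_iff₀ hn0 (by positivity)]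
  linarith

theorem rpow_one_div_lt_rpow_one_div_succ {b : ℕ → ℝ} (hb : ∀ m, 0 < b m)
    (hconv : ∀ m, b (m + 1) ^ 2 ≤ b m * b (m + 2)) (h0 : b 0 = 1) {n : ℕ} (hn : 1 ≤ n)
    (hlt : b 1 * b n < b (n + 1)) :
    b n ^ ((1 : ℝ) / n) < b (n + 1) ^ ((1 : ℝ) / (n + 1)) := by
  have hlog : log (b 1) < log (b (n + 1)) - log (b n) := by
    rw [lt_sub_iff_add_lt, ← log_mul (hb 1).ne' (hb n).ne']
    exact log_lt_log (mul_pos (hb 1) (hb n)) hlt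
  have key := div_lt_div_succ_of_monotone_sub (u := fun m => log (b m))
    (monotone_log_sub_of_sq_le_mul hb hconv) (by simp [h0]) hn hlog
  rw [← log_lt_log_iff (rpow_pos_of_pos (hb n) _) (rpow_pos_of_pos (hb (n + 1)) _),
    log_rpow (hb n), log_rpow (hb (n + 1)), one_div_mul_eq_div, one_div_mul_eq_div]
  exact key

theorem summable_natCast_pow_div_factorial (m : ℕ) :
    Summable fun k : ℕ => (k : ℝ) ^ m / k ! := by
  refine ((summable_pow_mul_geometric_of_norm_lt_one m (r := (1 / 2 : ℝ)) (by norm_num)).mul_right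
    (exp 2)).of_nonneg_of_le (fun k => by positivity) fun k => ?_
  calc (k : ℝ) ^ m / k ! = (k : ℝ) ^ m * (1 / 2) ^ k * (2 ^ k / k !) := by
        rw [one_div_pow]; field_simp
    _ ≤ (k : ℝ) ^ m * (1 / 2) ^ k * exp 2 := by
        gcongr; exact pow_div_factorial_le_exp 2 (by norm_num) k

noncomputable def dobinskiSum (m : ℕ) : ℝ := ∑' k : ℕ, (k : ℝ) ^ m / k !

theorem dobinskiSum_pos (m : ℕ) : 0 < dobinskiSum m :=
  (summable_natCast_pow_div_factorial m).tsum_pos (fun k => by positivity) 1 (by simp)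

theorem dobinskiSum_zero : dobinskiSum 0 = exp 1 := by
  rw [exp_eq_exp_ℝ, NormedSpace.exp_eq_tsum_div]
  simp [dobinskiSum]

theorem dobinskiSum_one : dobinskiSum 1 = exp 1 := by
  rw [← dobinskiSum_zero, dobinskiSum, (summable_natCast_pow_div_factorial 1).tsum_eq_zero_add]
  simp only [Nat.cast_zero, pow_one, zero_div, zero_add, dobinskiSum]
  refine tsum_congr fun j => ?_
  rw [Nat.factorial_succ, Nat.cast_mul]
  field_simp

theorem dobinskiSum_lt_succ {m : ℕ} (hm : 1 ≤ m) : dobinskiSum m < dobinskiSum (m + 1) := by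
  refine (summable_natCast_pow_div_factorial m).tsum_lt_tsum (i := 2) (fun k => ?_) ?_
    (summable_natCast_pow_div_factorial (m + 1))
  · rcases k.eq_zero_or_pos with rfl | hk
    · simp [zero_pow (show m ≠ 0 by omega)]
    · gcongr
      · exact Nat.one_le_cast.mpr hk
      · omega
  · gcongr <;> norm_num

theorem dobinskiSum_succ_sq_le (m : ℕ) :
    dobinskiSum (m + 1) ^ 2 ≤ dobinskiSum m * dobinskiSum (m + 2) := by
  simp only [dobinskiSum, div_eq_inv_mul]
  exact tsum_mul_pow_succ_sq_le (fun k => by positivity) (fun k => by positivity)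
    (by simpa only [div_eq_inv_mul] using summable_natCast_pow_div_factorial m)
    (by simpa only [div_eq_inv_mul] using summable_natCast_pow_div_factorial (m + 2))

/-- For every integer `n ≥ 1`,
`((1/e) ∑_{k ≥ 0} k^n/k!)^{1/n} < ((1/e) ∑_{k ≥ 0} k^{n+1}/k!)^{1/(n+1)}`. -/
theorem dobinski_sum_nthRoot_strictMono (n : ℕ) (hn : 1 ≤ n) :
    ((1 / Real.exp 1) * ∑' k : ℕ, (k : ℝ) ^ n / (Nat.factorial k : ℝ)) ^ ((1 : ℝ) / n) <
      ((1 / Real.exp 1) * ∑' k : ℕ, (k : ℝ) ^ (n + 1) / (Nat.factorial k : ℝ)) ^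
        ((1 : ℝ) / (n + 1)) := by
  set b : ℕ → ℝ := fun m => 1 / exp 1 * dobinskiSum m with hb_def
  have hb : ∀ m, 0 < b m := fun m => mul_pos (by positivity) (dobinskiSum_pos m)
  have hconv : ∀ m, b (m + 1) ^ 2 ≤ b m * b (m + 2) := fun m =>
    calc b (m + 1) ^ 2 = (1 / exp 1) ^ 2 * dobinskiSum (m + 1) ^ 2 := by ring
      _ ≤ (1 / exp 1) ^ 2 * (dobinskiSum m * dobinskiSum (m + 2)) := by
          gcongr; exact dobinskiSum_succ_sq_le m
      _ = b m * b (m + 2) := by ring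
  have h0 : b 0 = 1 := by simp [hb_def, dobinskiSum_zero]
  have h1 : b 1 = 1 := by simp [hb_def, dobinskiSum_one]
  have hlt : b 1 * b n < b (n + 1) := by
    rw [h1, one_mul]
    exact mul_lt_mul_of_pos_left (dobinskiSum_lt_succ hn) (by positivity)
  exact rpow_one_div_lt_rpow_one_div_succ hb hconv h0 hn hlt
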